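/- Let r be a regular reward function, p ∈ (0,1), s := 1/(1−p), and ω := η_s^{-1}. Define T(c) := Σ_{i=1}^∞ p(1−p)^{i−1} r(κ̄_s^{(i−1)}(ω(c))) for c ≥ 0. Then for Lebesgue-almost every c > 0, T is differentiable at c with T'(c) = p·r'(ω(c)). -/

import Mathlib

/-!
Each iterate `c ↦ κ̄_s^{(j)}(ω c)` is nondecreasing, hence differentiable at Lebesgue-almost every
`c`. Fix such a `c > 0` and let `m` be the first index with `κ̄_s^{(m)}(ω c) < τ_s`. Near `c` all
iterates beyond `m` vanish, so both `T` and `η_s ∘ ω = id` are finite sums over `j ≤ m`; the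
latter forces the derivatives `d_j` of the iterates to sum to `1`. Along the chain `j ≤ m` we have
`r'(κ̄_s^{(j)}(ω c)) = s^j r'(ω c)`, and `(1-p)^j s^j = 1`, so every term of `T'(c)` equals
`p r'(ω c) d_j`, and the sum is `p r'(ω c)`.
-/

open Set Filter MeasureTheory

/-- A regular reward function `r` with derivative `r'`: `r : [0,∞) → [0,∞)` is
nondecreasing, Lipschitz, strictly concave, differentiable, with `r 0 = 0`; its
derivative `r'` is continuous, strictly decreasing, positive, and tends to `0` at `+∞`.
For each `s ≥ 1`, `τ s` is the unique point with `r' (τ s) = r' 0 / s`, and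
`κ s : [τ s, ∞) → [0, ∞)` is defined by the relation `r' (κ s x) = s * r' x`
(for `s = 1` these reduce to `τ 1 = 0` and `κ 1 = id`); regularity means `κ s` is
convex on `[τ s, ∞)` for all `s > 1`. -/
structure RegularReward where
  r : ℝ → ℝ
  r' : ℝ → ℝ
  r_zero : r 0 = 0
  r_nonneg : ∀ x : ℝ, 0 ≤ x → 0 ≤ r x
  r_mono : MonotoneOn r (Ici (0 : ℝ))
  r_lip : ∃ K : NNReal, LipschitzOnWith K r (Ici (0 : ℝ))
  r_strictConcave : StrictConcaveOn ℝ (Ici (0 : ℝ)) r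
  r_hasDeriv : ∀ x : ℝ, 0 ≤ x → HasDerivWithinAt r (r' x) (Ici (0 : ℝ)) x
  deriv_cont : ContinuousOn r' (Ici (0 : ℝ))
  deriv_strictAnti : StrictAntiOn r' (Ici (0 : ℝ))
  deriv_pos : ∀ x : ℝ, 0 ≤ x → 0 < r' x
  deriv_tendsto_zero : Tendsto r' atTop (nhds 0)
  τ : ℝ → ℝ
  κ : ℝ → ℝ → ℝ
  τ_nonneg : ∀ s : ℝ, 1 ≤ s → 0 ≤ τ s
  τ_spec : ∀ s : ℝ, 1 ≤ s → r' (τ s) = r' 0 / s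
  κ_nonneg : ∀ s : ℝ, 1 ≤ s → ∀ x : ℝ, τ s ≤ x → 0 ≤ κ s x
  κ_spec : ∀ s : ℝ, 1 ≤ s → ∀ x : ℝ, τ s ≤ x → r' (κ s x) = s * r' x
  κ_convex : ∀ s : ℝ, 1 < s → ConvexOn ℝ (Ici (τ s)) (κ s)

namespace RegularReward

/-- The extension `κ̄_s (x) := κ_s (max x τ_s)` of `κ_s` to `[0, ∞)`. -/
noncomputable def kbar (R : RegularReward) (s : ℝ) (x : ℝ) : ℝ :=
  R.κ s (max x (R.τ s))

/-- `M_s(x) = ⌈ln (r' 0 / r' x) / ln s⌉`. -/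
noncomputable def M (R : RegularReward) (s : ℝ) (x : ℝ) : ℕ :=
  ⌈Real.log (R.r' 0 / R.r' x) / Real.log s⌉₊

/-- `M̃_s(x) = ⌊ln (r' 0 / r' x) / ln s⌋ + 1`. -/
noncomputable def Mt (R : RegularReward) (s : ℝ) (x : ℝ) : ℕ :=
  ⌊Real.log (R.r' 0 / R.r' x) / Real.log s⌋₊ + 1

/-- `η_s(x) := ∑_{i=1}^∞ κ̄_s^{(i-1)}(x)`, a finite sum since `κ̄_s^{(i)}(x) = 0` for
`i ≥ M_s(x)`. -/
noncomputable def η (R : RegularReward) (s : ℝ) (x : ℝ) : ℝ :=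
  ∑' i : ℕ, (R.kbar s)^[i] x

end RegularReward

open Topology

theorem one_lt_one_div_one_sub {p : ℝ} (hp : p ∈ Ioo (0 : ℝ) 1) : 1 < 1 / (1 - p) := by
  rw [lt_div_iff₀ (sub_pos.2 hp.2)]
  linarith [hp.1]

theorem StrictMonoOn.monotoneOn_of_rightInvOn {α β : Type*} [LinearOrder α] [Preorder β]
    {f : α → β} {g : β → α} {s : Set α} {t : Set β} (hf : StrictMonoOn f s) (hg : MapsTo g t s)
    (hfg : ∀ y ∈ t, f (g y) = y) : MonotoneOn g t := by
  intro x hx y hy hxy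
  rwa [← hf.le_iff_le (hg hx) (hg hy), hfg x hx, hfg y hy]

theorem sum_hasDerivAt_eq_one_of_sum_eventuallyEq_id {ι : Type*} {S : Finset ι}
    {g : ι → ℝ → ℝ} {d : ι → ℝ} {c : ℝ} (hg : ∀ j ∈ S, HasDerivAt (g j) (d j) c)
    (hsum : (fun x => ∑ j ∈ S, g j x) =ᶠ[𝓝 c] id) : ∑ j ∈ S, d j = 1 :=
  (HasDerivAt.fun_sum hg).unique ((hasDerivAt_id c).congr_of_eventuallyEq hsum)

namespace RegularReward

variable {R : RegularReward} {s : ℝ}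

theorem κ_τ_eq_zero (hs : 1 ≤ s) : R.κ s (R.τ s) = 0 := by
  have h := R.κ_spec s hs (R.τ s) le_rfl
  rw [R.τ_spec s hs, mul_div_cancel₀ _ (by positivity)] at h
  exact R.deriv_strictAnti.injOn (R.κ_nonneg s hs _ le_rfl) self_mem_Ici h

theorem kbar_nonneg (hs : 1 ≤ s) (x : ℝ) : 0 ≤ R.kbar s x :=
  R.κ_nonneg s hs _ (le_max_right _ _)

theorem kbar_eq_zero_of_le (hs : 1 ≤ s) {x : ℝ} (hx : x ≤ R.τ s) : R.kbar s x = 0 := by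
  rw [kbar, max_eq_right hx, κ_τ_eq_zero hs]

theorem kbar_eq_κ (x : ℝ) (hx : R.τ s ≤ x) : R.kbar s x = R.κ s x := by
  rw [kbar, max_eq_left hx]

theorem monotone_kbar (hs : 1 ≤ s) : Monotone (R.kbar s) := by
  intro x y hxy
  have hτx : R.τ s ≤ max x (R.τ s) := le_max_right _ _
  have hτy : R.τ s ≤ max y (R.τ s) := le_max_right _ _
  have h0 : (0 : ℝ) ≤ R.τ s := R.τ_nonneg s hs
  have hr' : R.r' (max y (R.τ s)) ≤ R.r' (max x (R.τ s)) :=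
    R.deriv_strictAnti.antitoneOn (mem_Ici.2 (h0.trans hτx)) (mem_Ici.2 (h0.trans hτy))
      (max_le_max hxy le_rfl)
  refine (R.deriv_strictAnti.le_iff_ge (mem_Ici.2 (R.κ_nonneg s hs _ hτy))
    (mem_Ici.2 (R.κ_nonneg s hs _ hτx))).1 ?_
  rw [R.κ_spec s hs _ hτx, R.κ_spec s hs _ hτy]
  exact mul_le_mul_of_nonneg_left hr' (by positivity)

theorem iterate_kbar_nonneg (hs : 1 ≤ s) {y : ℝ} (hy : 0 ≤ y) : ∀ j, 0 ≤ (R.kbar s)^[j] y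
  | 0 => hy
  | _ + 1 => by
    rw [Function.iterate_succ_apply']
    exact kbar_nonneg hs _

theorem r'_iterate_kbar (hs : 1 ≤ s) {y : ℝ} :
    ∀ {j : ℕ}, (∀ i < j, R.τ s ≤ (R.kbar s)^[i] y) → R.r' ((R.kbar s)^[j] y) = s ^ j * R.r' y
  | 0, _ => by simp
  | j + 1, h => by
    have hj := h j j.lt_succ_self
    rw [Function.iterate_succ_apply', kbar_eq_κ _ hj, R.κ_spec s hs _ hj,
      r'_iterate_kbar hs fun i hi => h i (hi.trans j.lt_succ_self), pow_succ]
    ring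

theorem exists_iterate_kbar_lt_τ (hs : 1 < s) {y : ℝ} (hy : 0 ≤ y) :
    ∃ j, (R.kbar s)^[j] y < R.τ s := by
  by_contra! hge
  obtain ⟨n, hn⟩ := pow_unbounded_of_one_lt (R.r' 0 / R.r' y) hs
  have hle : R.r' ((R.kbar s)^[n] y) ≤ R.r' 0 :=
    R.deriv_strictAnti.antitoneOn self_mem_Ici (mem_Ici.2 ((R.τ_nonneg s hs.le).trans (hge n)))
      ((R.τ_nonneg s hs.le).trans (hge n))
  rw [r'_iterate_kbar hs.le fun i _ => hge i] at hle
  rw [div_lt_iff₀ (R.deriv_pos y hy)] at hn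
  linarith

theorem iterate_kbar_eq_zero_of_lt (hs : 1 ≤ s) {y : ℝ} {m k : ℕ}
    (hm : (R.kbar s)^[m] y < R.τ s) (hmk : m < k) : (R.kbar s)^[k] y = 0 := by
  obtain ⟨n, rfl⟩ := Nat.exists_eq_add_of_lt hmk
  rw [show m + n + 1 = n + (m + 1) by omega, Function.iterate_add_apply,
    Function.iterate_succ_apply', kbar_eq_zero_of_le hs hm.le,
    Function.iterate_fixed (kbar_eq_zero_of_le hs (R.τ_nonneg s hs))]

theorem tsum_iterate_kbar_eq_sum (hs : 1 ≤ s) {y : ℝ} {m : ℕ} (hm : (R.kbar s)^[m] y < R.τ s)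
    (F : ℕ → ℝ → ℝ) (hF : ∀ j, F j 0 = 0) :
    ∑' j, F j ((R.kbar s)^[j] y) = ∑ j ∈ Finset.range (m + 1), F j ((R.kbar s)^[j] y) :=
  tsum_eq_sum fun j hj => by
    rw [iterate_kbar_eq_zero_of_lt hs hm (by simpa using hj), hF]

theorem η_strictMonoOn (hs : 1 < s) : StrictMonoOn (R.η s) (Ici 0) := by
  intro a ha b hb hab
  have hsummable : ∀ {y : ℝ}, 0 ≤ y → Summable fun j => (R.kbar s)^[j] y := fun hy =>
    let ⟨m, hm⟩ := exists_iterate_kbar_lt_τ hs hy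
    summable_of_ne_finset_zero (s := Finset.range (m + 1)) fun j hj =>
      iterate_kbar_eq_zero_of_lt hs.le hm (by simpa using hj)
  exact Summable.tsum_lt_tsum (i := 0) (fun j => (monotone_kbar hs.le).iterate j hab.le)
    hab (hsummable ha) (hsummable hb)

theorem hasDerivAt_bernoulliReward {p : ℝ} (hp : p ∈ Ioo (0 : ℝ) 1) (hs : s = 1 / (1 - p))
    {ω : ℝ → ℝ} (hω_nonneg : ∀ x : ℝ, 0 ≤ x → 0 ≤ ω x)
    (hω_rightInv : ∀ x : ℝ, 0 ≤ x → R.η s (ω x) = x) {c : ℝ} (hc : 0 < c)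
    (hdiff : ∀ j, DifferentiableAt ℝ (fun x => (R.kbar s)^[j] (ω x)) c) :
    HasDerivAt (fun x => ∑' j : ℕ, p * (1 - p) ^ j * R.r ((R.kbar s)^[j] (ω x)))
      (p * R.r' (ω c)) c := by
  have hps : (1 - p) * s = 1 := by rw [hs]; field_simp [(sub_pos.2 hp.2).ne']
  have hs1 : 1 < s := hs ▸ one_lt_one_div_one_sub hp
  set g : ℕ → ℝ → ℝ := fun j x => (R.kbar s)^[j] (ω x)
  set d : ℕ → ℝ := fun j => deriv (g j) c
  have hg : ∀ j, HasDerivAt (g j) (d j) c := fun j => (hdiff j).hasDerivAt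
  have hex := exists_iterate_kbar_lt_τ (R := R) hs1 (hω_nonneg c hc.le)
  set m := Nat.find hex
  have hchain : ∀ j ≤ m, R.r' (g j c) = s ^ j * R.r' (ω c) := fun j hj =>
    r'_iterate_kbar hs1.le fun i hi => not_lt.1 (Nat.find_min hex (hi.trans_le hj))
  -- `g m < τ_s` persists near `c` by continuity, so the series are finite sums there.
  have hnear : ∀ᶠ x in 𝓝 c, 0 < x ∧ g m x < R.τ s :=
    (eventually_gt_nhds hc).and ((hg m).continuousAt.eventually (Iio_mem_nhds (Nat.find_spec hex)))
  have hsum_id : (fun x => ∑ j ∈ Finset.range (m + 1), g j x) =ᶠ[𝓝 c] id := by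
    filter_upwards [hnear] with x ⟨hx, hxm⟩
    rw [← tsum_iterate_kbar_eq_sum hs1.le hxm (fun _ y => y) fun _ => rfl]
    exact hω_rightInv x hx.le
  have hd_sum := sum_hasDerivAt_eq_one_of_sum_eventuallyEq_id (fun j _ => hg j) hsum_id
  have hpow : ∀ j : ℕ, (1 - p) ^ j * s ^ j = 1 := fun j => by rw [← mul_pow, hps, one_pow]
  have hterm : ∀ j ∈ Finset.range (m + 1), HasDerivAt (fun x => p * (1 - p) ^ j * R.r (g j x))
      (p * R.r' (ω c) * d j) c := by
    intro j hj
    have hr := (R.r_hasDeriv _ (iterate_kbar_nonneg hs1.le (hω_nonneg c hc.le) j)).comp_hasDerivAt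
      c (hg j) (hnear.mono fun x hx => iterate_kbar_nonneg hs1.le (hω_nonneg x hx.1.le) j)
    refine (hr.const_mul (p * (1 - p) ^ j)).congr_deriv ?_
    rw [hchain j (Finset.mem_range_succ_iff.1 hj)]
    linear_combination p * R.r' (ω c) * d j * hpow j
  have hT := (HasDerivAt.fun_sum hterm).congr_of_eventuallyEq (hnear.mono fun x hx =>
    tsum_iterate_kbar_eq_sum hs1.le hx.2 (fun j y => p * (1 - p) ^ j * R.r y)
      fun _ => by rw [R.r_zero, mul_zero])
  rwa [← Finset.mul_sum, hd_sum, mul_one] at hT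

end RegularReward

theorem bernoulli_reward_deriv_general (R : RegularReward) (p : ℝ) (hp : p ∈ Set.Ioo (0 : ℝ) 1)
    (s : ℝ) (hs : s = 1 / (1 - p))
    (ω : ℝ → ℝ)
    (hω_nonneg : ∀ x : ℝ, 0 ≤ x → 0 ≤ ω x)
    (hω_rightInv : ∀ x : ℝ, 0 ≤ x → R.η s (ω x) = x) :
    ∀ᵐ c ∂(MeasureTheory.volume.restrict (Set.Ioi (0 : ℝ))),
      HasDerivAt (fun c : ℝ => ∑' i : ℕ, p * (1 - p) ^ i * R.r ((R.kbar s)^[i] (ω c)))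
        (p * R.r' (ω c)) c := by
  have hs1 : 1 < s := hs ▸ one_lt_one_div_one_sub hp
  have hω_mono : MonotoneOn ω (Ici 0) :=
    (RegularReward.η_strictMonoOn hs1).monotoneOn_of_rightInvOn hω_nonneg hω_rightInv
  have hdiff : ∀ᵐ c ∂(volume.restrict (Ioi (0 : ℝ))),
      ∀ j, DifferentiableWithinAt ℝ (fun x => (R.kbar s)^[j] (ω x)) (Ioi 0) c :=
    ae_all_iff.2 fun j =>
      (((RegularReward.monotone_kbar hs1.le).iterate j).comp_monotoneOn
        (hω_mono.mono Ioi_subset_Ici_self)).ae_differentiableWithinAt measurableSet_Ioi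
  filter_upwards [hdiff, ae_restrict_mem measurableSet_Ioi] with c hdiff_c hc
  exact RegularReward.hasDerivAt_bernoulliReward hp hs hω_nonneg hω_rightInv hc
    fun j => (hdiff_c j).differentiableAt (Ioi_mem_nhds hc)

/-- **Derivative of the Bernoulli optimal reward in the capacity** (Lemma 3). Let `r` be
a regular reward function, `p ∈ (0,1)`, `s = 1/(1-p)`, `ω = η_s⁻¹`, and let
`T(c) := ∑_{i=1}^∞ p (1-p)^{i-1} r (κ̄_s^{(i-1)}(ω c))` be the asymptotic expected
average reward of `ω` under Bernoulli arrivals with battery capacity `c`. Then for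
Lebesgue-almost every `c > 0`, `T` is differentiable at `c` with
`T'(c) = p · r'(ω c)`. -/
theorem bernoulli_reward_deriv (R : RegularReward) (p : ℝ) (hp : p ∈ Set.Ioo (0 : ℝ) 1)
    (s : ℝ) (hs : s = 1 / (1 - p))
    (ω : ℝ → ℝ)
    (hω_nonneg : ∀ x : ℝ, 0 ≤ x → 0 ≤ ω x)
    (hω_rightInv : ∀ x : ℝ, 0 ≤ x → R.η s (ω x) = x)
    (hω_leftInv : ∀ y : ℝ, 0 ≤ y → ω (R.η s y) = y) :
    ∀ᵐ c ∂(MeasureTheory.volume.restrict (Set.Ioi (0 : ℝ))),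
      HasDerivAt (fun c : ℝ => ∑' i : ℕ, p * (1 - p) ^ i * R.r ((R.kbar s)^[i] (ω c)))
        (p * R.r' (ω c)) c :=
  bernoulli_reward_deriv_general R p hp s hs ω hω_nonneg hω_rightInv
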